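/- arXiv:2603.08552 — 9 statements merged into one kernel-verified Lean document; each statement's English description precedes it below -/
import Mathlib

section
/- Let ŷ be the unique root of Δℒ in (0, δ·C^{α−1}), and define X(y) = h(y) for 0 < y < ŷ and X(y) = 0 for y ≥ ŷ. Then for every y > 0, X(y) maximizes the Lagrangian ℒ(y,·) over [0,∞): for all x ≥ 0, u(g(x)) − y·x ≤ u(g(X(y))) − y·X(y), where g(0) = C so that u(g(X(y))) − y·X(y) = u(C) when y ≥ ŷ. -/
/-!
For `x ≥ K` the payoff is affine with slope `δ`, so by concavity of the power utility
`ℒ(y, ·)` is maximized on `[K, ∞)` at the first-order point `h y`, where `g (h y) = I (y / δ)`;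
on `[0, K]` the payoff is the constant `C`, so there `ℒ(y, ·) ≤ u C`. Which of the two regimes
wins is decided by comparing with `ŷ`: since `ℒ(·, x)` is antitone for `x ≥ 0`, for `y ≥ ŷ`
everything is bounded by `ℒ(ŷ, h ŷ) = u C`, while for `y < ŷ` we get
`u C = ℒ(ŷ, h ŷ) ≤ ℒ(y, h ŷ) ≤ ℒ(y, h y)`.
-/

open Real Set

lemma rpow_sub_one_div_le_sub_one {α t : ℝ} (hα : α < 1) (hα0 : α ≠ 0) (ht : 0 < t) :
    (t ^ α - 1) / α ≤ t - 1 := by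
  rcases hα0.lt_or_gt with hneg | hpos
  · have hexp : 1 + α * log t ≤ t ^ α := by
      rw [rpow_def_of_pos ht]
      linarith [add_one_le_exp (log t * α)]
    rw [div_le_iff_of_neg hneg]
    nlinarith [log_le_sub_one_of_pos ht]
  · have hbern : t ^ α ≤ 1 + α * (t - 1) := by
      simpa using rpow_one_add_le_one_add_mul_self (s := t - 1) (by linarith) hpos.le hα.le
    rw [div_le_iff₀ hpos]
    linarith

lemma rpow_div_sub_rpow_div_le {α a b : ℝ} (hα : α < 1) (hα0 : α ≠ 0) (ha : 0 < a)
    (hb : 0 < b) : b ^ α / α - a ^ α / α ≤ a ^ (α - 1) * (b - a) := by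
  have hbern := mul_le_mul_of_nonneg_left
    (rpow_sub_one_div_le_sub_one hα hα0 (div_pos hb ha)) (rpow_pos_of_pos ha α).le
  rw [div_rpow hb.le ha.le] at hbern
  rw [rpow_sub ha, rpow_one]
  calc b ^ α / α - a ^ α / α = a ^ α * ((b ^ α / a ^ α - 1) / α) := by
        field_simp [(rpow_pos_of_pos ha α).ne']
    _ ≤ a ^ α * (b / a - 1) := hbern
    _ = a ^ α / a * (b - a) := by field_simp

lemma le_rpow_inv_sub_one {α C z : ℝ} (hα : α < 1) (hC : 0 < C) (hz : 0 < z)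
    (hzC : z ≤ C ^ (α - 1)) : C ≤ z ^ (α - 1)⁻¹ := by
  calc C = (C ^ (α - 1)) ^ (α - 1)⁻¹ := (rpow_rpow_inv hC.le (by linarith)).symm
    _ ≤ z ^ (α - 1)⁻¹ := rpow_le_rpow_of_nonpos hz hzC (inv_nonpos.mpr (by linarith))

noncomputable section

namespace PowerUtilityOption

def utility (α x : ℝ) : ℝ := x ^ α / α

def payoff (δ K C x : ℝ) : ℝ := δ * max (x - K) 0 + C

def lagrangian (α δ K C y x : ℝ) : ℝ := utility α (payoff δ K C x) - y * x

/-- The first-order point `h y = (I (y / δ) - C) / δ + K` of `ℒ(y, ·)` on `[K, ∞)`. -/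
def critical (α δ K C y : ℝ) : ℝ := ((y / δ) ^ (1 / (α - 1)) - C) / δ + K

variable {α δ K C x y : ℝ}

lemma payoff_of_le (hx : x ≤ K) : payoff δ K C x = C := by
  simp [payoff, max_eq_right (sub_nonpos.mpr hx)]

lemma payoff_of_ge (hx : K ≤ x) : payoff δ K C x = δ * (x - K) + C := by
  rw [payoff, max_eq_left (sub_nonneg.mpr hx)]

lemma lagrangian_antitone (hx : 0 ≤ x) {y' : ℝ} (hyy' : y ≤ y') :
    lagrangian α δ K C y' x ≤ lagrangian α δ K C y x :=
  sub_le_sub_left (mul_le_mul_of_nonneg_right hyy' hx) _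

lemma lagrangian_le_utility_of_le (hy : 0 ≤ y) (hx : 0 ≤ x) (hxK : x ≤ K) :
    lagrangian α δ K C y x ≤ utility α C := by
  rw [lagrangian, payoff_of_le hxK]
  linarith [mul_nonneg hy hx]

section Critical

variable (hα : α < 1) (hδ : 0 < δ) (hC : 0 < C) (hy : 0 < y) (hyC : y ≤ δ * C ^ (α - 1))
include hα hδ hC hy hyC

lemma le_rpow_critical : C ≤ (y / δ) ^ (1 / (α - 1)) := by
  rw [one_div]
  refine le_rpow_inv_sub_one hα hC (div_pos hy hδ) ?_
  rwa [div_le_iff₀ hδ, mul_comm]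

lemma le_critical : K ≤ critical α δ K C y := by
  have := div_nonneg (sub_nonneg.mpr (le_rpow_critical hα hδ hC hy hyC)) hδ.le
  rw [critical]
  linarith

lemma payoff_critical : payoff δ K C (critical α δ K C y) = (y / δ) ^ (1 / (α - 1)) := by
  rw [payoff_of_ge (le_critical hα hδ hC hy hyC), critical]
  field_simp
  ring

lemma lagrangian_le_lagrangian_critical (hα0 : α ≠ 0) (hxK : K ≤ x) :
    lagrangian α δ K C y x ≤ lagrangian α δ K C y (critical α δ K C y) := by
  set a := (y / δ) ^ (1 / (α - 1))
  have ha : 0 < a := rpow_pos_of_pos (div_pos hy hδ) _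
  have hslope : a ^ (α - 1) = y / δ := by
    simp only [a, one_div]
    exact rpow_inv_rpow (div_pos hy hδ).le (sub_ne_zero.mpr hα.ne)
  have hgx : 0 < payoff δ K C x := by
    rw [payoff_of_ge hxK]
    nlinarith
  have htangent := rpow_div_sub_rpow_div_le hα hα0 ha hgx
  have hlinear : y / δ * (payoff δ K C x - a) = y * (x - critical α δ K C y) := by
    rw [payoff_of_ge hxK, critical]
    field_simp
    ring
  rw [hslope, hlinear] at htangent
  simp only [lagrangian, utility, payoff_critical hα hδ hC hy hyC]
  linarith

end Critical

section Root

variable {yhat : ℝ} (hα : α < 1) (hα0 : α ≠ 0) (hδ : 0 < δ) (hC : 0 < C)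
  (hyhat : yhat ∈ Ioo 0 (δ * C ^ (α - 1)))
  (hroot : lagrangian α δ K C yhat (critical α δ K C yhat) = utility α C)
include hα hα0 hδ hC hyhat hroot

lemma lagrangian_le_utility_of_root_le (hy : yhat ≤ y) (hx : 0 ≤ x) :
    lagrangian α δ K C y x ≤ utility α C := by
  rcases le_total x K with hxK | hxK
  · exact lagrangian_le_utility_of_le (hyhat.1.le.trans hy) hx hxK
  · calc lagrangian α δ K C y x ≤ lagrangian α δ K C yhat x := lagrangian_antitone hx hy
      _ ≤ lagrangian α δ K C yhat (critical α δ K C yhat) :=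
        lagrangian_le_lagrangian_critical hα hδ hC hyhat.1 hyhat.2.le hα0 hxK
      _ = utility α C := hroot

lemma lagrangian_le_lagrangian_critical_of_lt_root (hK : 0 ≤ K) (hy : 0 < y) (hyyhat : y < yhat)
    (hx : 0 ≤ x) : lagrangian α δ K C y x ≤ lagrangian α δ K C y (critical α δ K C y) := by
  have hyC : y ≤ δ * C ^ (α - 1) := hyyhat.le.trans hyhat.2.le
  rcases le_total K x with hxK | hxK
  · exact lagrangian_le_lagrangian_critical hα hδ hC hy hyC hα0 hxK
  have hKc : K ≤ critical α δ K C yhat := le_critical hα hδ hC hyhat.1 hyhat.2.le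
  calc lagrangian α δ K C y x ≤ utility α C := lagrangian_le_utility_of_le hy.le hx hxK
    _ = lagrangian α δ K C yhat (critical α δ K C yhat) := hroot.symm
    _ ≤ lagrangian α δ K C y (critical α δ K C yhat) :=
      lagrangian_antitone (hK.trans hKc) hyyhat.le
    _ ≤ lagrangian α δ K C y (critical α δ K C y) :=
      lagrangian_le_lagrangian_critical hα hδ hC hy hyC hα0 hKc

end Root

end PowerUtilityOption

end

open PowerUtilityOption in
theorem stmt0_general
    (α δ K C : ℝ) (hα : α < 1) (hα0 : α ≠ 0) (hδ : δ ∈ Set.Ioc (0:ℝ) 1)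
    (hK : 0 < K) (hC : 0 < C)
    (u : ℝ → ℝ) (hu : ∀ x, u x = x ^ α / α)
    (g : ℝ → ℝ) (hg : ∀ x, g x = δ * max (x - K) 0 + C)
    (I : ℝ → ℝ) (hI : ∀ x, I x = x ^ (1 / (α - 1)))
    (h : ℝ → ℝ) (hh : ∀ y, h y = (I (y / δ) - C) / δ + K)
    (ΔL : ℝ → ℝ) (hΔL : ∀ y, ΔL y = u (g (h y)) - u C - y * h y)
    (yhat : ℝ) (hyhatmem : yhat ∈ Set.Ioo 0 (δ * C ^ (α - 1)))
    (hroot : ΔL yhat = 0)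
    (X : ℝ → ℝ) (hX : ∀ y, X y = if y < yhat then h y else 0) :
    (∀ y > 0, ∀ x ≥ 0, u (g x) - y * x ≤ u (g (X y)) - y * X y) ∧
      g 0 = C ∧ (∀ y, yhat ≤ y → u (g (X y)) - y * X y = u C) := by
  obtain rfl : u = utility α := funext hu
  obtain rfl : g = payoff δ K C := funext hg
  obtain rfl : h = critical α δ K C := funext fun y => by rw [hh, hI, critical]
  have hroot' : lagrangian α δ K C yhat (critical α δ K C yhat) = utility α C := by
    rw [hΔL] at hroot
    rw [lagrangian]
    linarith
  have hg0 : payoff δ K C 0 = C := payoff_of_le hK.le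
  have hvalue : ∀ y, yhat ≤ y → lagrangian α δ K C y (X y) = utility α C := fun y hy => by
    rw [hX, if_neg hy.not_gt, lagrangian, hg0, mul_zero, sub_zero]
  refine ⟨fun y hy x hx => ?_, hg0, hvalue⟩
  show lagrangian α δ K C y x ≤ lagrangian α δ K C y (X y)
  by_cases hyyhat : y < yhat
  · rw [hX, if_pos hyyhat]
    exact lagrangian_le_lagrangian_critical_of_lt_root hα hα0 hδ.1 hC hyhatmem hroot' hK.le
      hy hyyhat hx
  · rw [hvalue y (not_lt.mp hyyhat)]
    exact lagrangian_le_utility_of_root_le hα hα0 hδ.1 hC hyhatmem hroot' (not_lt.mp hyyhat) hx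

/-- with yhat the unique root of Δℒ in (0, δ·C^{α−1}) and
X(y) = h(y) for 0 < y < yhat, X(y) = 0 for y ≥ yhat, the value X(y) maximizes
the Lagrangian ℒ(y,·) = u(g(·)) − y·(·) over [0,∞) for every y > 0;
moreover g(0) = C, so the maximal value is u(C) when y ≥ yhat. -/
theorem stmt0
    (α δ K C : ℝ) (hα : α < 1) (hα0 : α ≠ 0) (hδ : δ ∈ Set.Ioc (0:ℝ) 1)
    (hK : 0 < K) (hC : 0 < C)
    (u : ℝ → ℝ) (hu : ∀ x, u x = x ^ α / α)
    (g : ℝ → ℝ) (hg : ∀ x, g x = δ * max (x - K) 0 + C)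
    (I : ℝ → ℝ) (hI : ∀ x, I x = x ^ (1 / (α - 1)))
    (h : ℝ → ℝ) (hh : ∀ y, h y = (I (y / δ) - C) / δ + K)
    (ΔL : ℝ → ℝ) (hΔL : ∀ y, ΔL y = u (g (h y)) - u C - y * h y)
    (yhat : ℝ) (hyhatmem : yhat ∈ Set.Ioo 0 (δ * C ^ (α - 1)))
    (hroot : ΔL yhat = 0)
    (huniq : ∀ y ∈ Set.Ioo 0 (δ * C ^ (α - 1)), ΔL y = 0 → y = yhat)
    (X : ℝ → ℝ) (hX : ∀ y, X y = if y < yhat then h y else 0) :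
    (∀ y > 0, ∀ x ≥ 0, u (g x) - y * x ≤ u (g (X y)) - y * X y) ∧
      g 0 = C ∧ (∀ y, yhat ≤ y → u (g (X y)) - y * X y = u C) :=
  stmt0_general α δ K C hα hα0 hδ hK hC u hu g hg I hI h hh ΔL hΔL yhat hyhatmem hroot X hX
end

section
/- The function X is nonincreasing on (0,∞) and strictly decreasing on (0, ŷ); it is continuous on (0,∞) except at ŷ, where it jumps from the left limit h(ŷ) > K > 0 down to X(ŷ) = 0; moreover X(y) → +∞ as y → 0⁺ and X(y) = 0 for all y ≥ ŷ. -/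
open Real Set Filter Topology

/-!
On `(0, ŷ)` the function `X` is `h(y) = g⁻¹(I(y/δ))`, an increasing affine image of the power
`y ↦ (y/δ)^(1/(α-1))`, which has a negative exponent: so `h` is continuous, strictly decreasing
and blows up at `0⁺`. Since `ŷ < δ C^(α-1)` we get `I(ŷ/δ) > C`, i.e. `h ŷ > K > 0`, so cutting
`h` down to `0` from `ŷ` on keeps `X` nonincreasing and creates a single jump, at `ŷ`.
-/

section Truncation

variable {α β : Type*} [LinearOrder α] {f : α → β} {a c : α} {b : β}

theorem eqOn_ite_lt : EqOn (fun y => if y < c then f y else b) f (Iio c) :=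
  fun _ hy => if_pos hy

theorem antitoneOn_ite_lt [Preorder β] (hf : AntitoneOn f (Ioo a c))
    (hb : ∀ y ∈ Ioo a c, b ≤ f y) :
    AntitoneOn (fun y => if y < c then f y else b) (Ioi a) := by
  intro x hx y hy hxy
  by_cases hyc : y < c
  · have hxc : x < c := hxy.trans_lt hyc
    simpa only [if_pos hxc, if_pos hyc] using hf ⟨hx, hxc⟩ ⟨hy, hyc⟩ hxy
  · simp only [if_neg hyc]
    split_ifs with hxc
    exacts [hb x ⟨hx, hxc⟩, le_rfl]

theorem continuousAt_ite_lt [TopologicalSpace α] [OrderTopology α] [TopologicalSpace β] {y : α}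
    (hf : ContinuousOn f (Ioo a c)) (hy : y ∈ Ioi a) (hyc : y ≠ c) :
    ContinuousAt (fun y => if y < c then f y else b) y := by
  rcases hyc.lt_or_gt with hyc | hcy
  · refine (hf.continuousAt (Ioo_mem_nhds hy hyc)).congr_of_eventuallyEq ?_
    filter_upwards [eventually_lt_nhds hyc] with z hz using if_pos hz
  · refine (continuousAt_const (y := b)).congr_of_eventuallyEq ?_
    filter_upwards [eventually_gt_nhds hcy] with z hz using if_neg hz.not_gt

end Truncation

noncomputable def optimizer (p δ C K y : ℝ) : ℝ := ((y / δ) ^ p - C) / δ + K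

section Optimizer

variable {p δ C K : ℝ}

theorem optimizer_strictAntiOn (hp : p < 0) (hδ : 0 < δ) :
    StrictAntiOn (optimizer p δ C K) (Ioi 0) := by
  intro x hx y hy hxy
  have := strictAntiOn_rpow_Ioi_of_exponent_neg hp (div_pos hx hδ) (div_pos hy hδ)
    (div_lt_div_of_pos_right hxy hδ)
  unfold optimizer
  gcongr

theorem continuousOn_optimizer (hδ : 0 < δ) : ContinuousOn (optimizer p δ C K) (Ioi 0) :=
  (((continuousOn_id.div_const δ).rpow_const fun _ hy => .inl (div_pos hy hδ).ne').sub
    continuousOn_const |>.div_const δ).add continuousOn_const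

theorem tendsto_optimizer_nhdsGT_zero (hp : p < 0) (hδ : 0 < δ) :
    Tendsto (optimizer p δ C K) (𝓝[>] 0) atTop := by
  have hpow : Tendsto (fun y => (y / δ) ^ p) (𝓝[>] 0) atTop := by
    refine ((tendsto_rpow_neg_nhdsGT_zero hp).atTop_div_const (rpow_pos_of_pos hδ p)).congr' ?_
    filter_upwards [self_mem_nhdsWithin] with y hy using (div_rpow (le_of_lt hy) hδ.le p).symm
  unfold optimizer
  simpa only [sub_eq_add_neg] using
    tendsto_atTop_add_const_right _ K
      ((tendsto_atTop_add_const_right _ (-C) hpow).atTop_div_const hδ)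

theorem lt_optimizer {y : ℝ} (hδ : 0 < δ) (hy : C < (y / δ) ^ p) : K < optimizer p δ C K y := by
  have := div_pos (sub_pos.2 hy) hδ
  unfold optimizer
  linarith

end Optimizer

theorem lt_rpow_one_div_of_lt_rpow {C t q : ℝ} (hC : 0 ≤ C) (hq : q < 0) (ht : 0 < t)
    (htC : t < C ^ q) : C < t ^ (1 / q) := by
  calc C = (C ^ q) ^ (1 / q) := by rw [← rpow_mul hC, mul_one_div_cancel hq.ne, rpow_one]
    _ < t ^ (1 / q) := rpow_lt_rpow_of_neg ht htC (one_div_neg.2 hq)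

theorem stmt2_general
    (α δ K C : ℝ) (hα : α < 1) (hδ : δ ∈ Set.Ioc (0:ℝ) 1)
    (hK : 0 < K) (hC : 0 < C)
    (I : ℝ → ℝ) (hI : ∀ x, I x = x ^ (1 / (α - 1)))
    (h : ℝ → ℝ) (hh : ∀ y, h y = (I (y / δ) - C) / δ + K)
    (yhat : ℝ) (hyhatmem : yhat ∈ Set.Ioo 0 (δ * C ^ (α - 1)))
    (X : ℝ → ℝ) (hX : ∀ y, X y = if y < yhat then h y else 0) :
    AntitoneOn X (Set.Ioi 0) ∧
      StrictAntiOn X (Set.Ioo 0 yhat) ∧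
      (∀ y, 0 < y → y ≠ yhat → ContinuousAt X y) ∧
      Tendsto X (nhdsWithin yhat (Set.Iio yhat)) (nhds (h yhat)) ∧
      K < h yhat ∧ X yhat = 0 ∧
      Tendsto X (nhdsWithin 0 (Set.Ioi 0)) atTop ∧
      (∀ y, yhat ≤ y → X y = 0) := by
  obtain ⟨hδ0, -⟩ := hδ
  obtain ⟨hyhat0, hyhat⟩ := hyhatmem
  have hα1 : α - 1 < 0 := sub_neg.2 hα
  obtain rfl : h = optimizer (1 / (α - 1)) δ C K := funext fun y => by rw [hh, hI]; rfl
  obtain rfl : X = fun y => if y < yhat then optimizer (1 / (α - 1)) δ C K y else 0 := funext hX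
  have h_anti : StrictAntiOn (optimizer (1 / (α - 1)) δ C K) (Ioi 0) :=
    optimizer_strictAntiOn (one_div_neg.2 hα1) hδ0
  have hK_lt : K < optimizer (1 / (α - 1)) δ C K yhat :=
    lt_optimizer hδ0 <| lt_rpow_one_div_of_lt_rpow hC.le hα1 (div_pos hyhat0 hδ0)
      ((div_lt_iff₀' hδ0).2 hyhat)
  have h_cont : ContinuousOn (optimizer (1 / (α - 1)) δ C K) (Ioi 0) := continuousOn_optimizer hδ0
  have h_nonneg (y : ℝ) (hy : y ∈ Ioo 0 yhat) : 0 ≤ optimizer (1 / (α - 1)) δ C K y :=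
    (hK.trans (hK_lt.trans (h_anti hy.1 hyhat0 hy.2))).le
  refine ⟨antitoneOn_ite_lt (h_anti.mono Ioo_subset_Ioi_self).antitoneOn h_nonneg,
    (h_anti.mono Ioo_subset_Ioi_self).congr (eqOn_ite_lt.mono Ioo_subset_Iio_self).symm,
    fun y hy hne => continuousAt_ite_lt (h_cont.mono Ioo_subset_Ioi_self) hy hne,
    tendsto_nhdsWithin_congr (fun y hy => (eqOn_ite_lt hy).symm)
      ((h_cont.continuousAt (Ioi_mem_nhds hyhat0)).tendsto.mono_left nhdsWithin_le_nhds),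
    hK_lt, if_neg (lt_irrefl _), ?_, fun y hy => if_neg hy.not_gt⟩
  exact (tendsto_optimizer_nhdsGT_zero (one_div_neg.2 hα1) hδ0).congr'
    ((eqOn_ite_lt.mono Ioo_subset_Iio_self).eventuallyEq_of_mem (Ioo_mem_nhdsGT hyhat0)).symm

/-- X is nonincreasing on (0,∞), strictly decreasing on (0,ŷ),
continuous at every point of (0,∞) other than ŷ, has left limit h(ŷ) > K > 0
at ŷ while X(ŷ) = 0, tends to +∞ as y → 0⁺, and vanishes on [ŷ,∞). -/
theorem stmt2
    (α δ K C : ℝ) (hα : α < 1) (hα0 : α ≠ 0) (hδ : δ ∈ Set.Ioc (0:ℝ) 1)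
    (hK : 0 < K) (hC : 0 < C)
    (u : ℝ → ℝ) (hu : ∀ x, u x = x ^ α / α)
    (g : ℝ → ℝ) (hg : ∀ x, g x = δ * max (x - K) 0 + C)
    (I : ℝ → ℝ) (hI : ∀ x, I x = x ^ (1 / (α - 1)))
    (h : ℝ → ℝ) (hh : ∀ y, h y = (I (y / δ) - C) / δ + K)
    (ΔL : ℝ → ℝ) (hΔL : ∀ y, ΔL y = u (g (h y)) - u C - y * h y)
    (yhat : ℝ) (hyhatmem : yhat ∈ Set.Ioo 0 (δ * C ^ (α - 1)))
    (hroot : ΔL yhat = 0)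
    (huniq : ∀ y ∈ Set.Ioo 0 (δ * C ^ (α - 1)), ΔL y = 0 → y = yhat)
    (X : ℝ → ℝ) (hX : ∀ y, X y = if y < yhat then h y else 0) :
    AntitoneOn X (Set.Ioi 0) ∧
      StrictAntiOn X (Set.Ioo 0 yhat) ∧
      (∀ y, 0 < y → y ≠ yhat → ContinuousAt X y) ∧
      Tendsto X (nhdsWithin yhat (Set.Iio yhat)) (nhds (h yhat)) ∧
      K < h yhat ∧ X yhat = 0 ∧
      Tendsto X (nhdsWithin 0 (Set.Ioi 0)) atTop ∧
      (∀ y, yhat ≤ y → X y = 0) :=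
  stmt2_general α δ K C hα hδ hK hC I hI h hh yhat hyhatmem X hX
end

section
/- For every y ≥ δ·C^{α−1}, the function x ↦ ℒ(y,x) = u(g(x)) − y·x is strictly decreasing on [0,∞); in particular, for every x > 0 one has u(g(x)) − y·x < u(C) = ℒ(y,0), so x = 0 is the unique maximizer of ℒ(y,·) on [0,∞). -/
open Real Set

/-!
On `[0, K]` the payoff is the constant `C`, so `ℒ(y, ·)` is affine with slope `-y < 0`. On
`[K, ∞)` its derivative is `δ g(x)^(α-1) - y`, and since `g(x) > C` for `x > K` and `α - 1 < 0`,
this is `< δ C^(α-1) - y ≤ 0`. The two strictly decreasing pieces glue at `K`.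
-/

lemma hasDerivAt_rpow_div_self {α t : ℝ} (hα : α ≠ 0) (ht : 0 < t) :
    HasDerivAt (fun x : ℝ => x ^ α / α) (t ^ (α - 1)) t := by
  have := (hasDerivAt_rpow_const (p := α) (Or.inl ht.ne')).div_const α
  rwa [mul_div_cancel_left₀ _ hα] at this

lemma strictAntiOn_rpow_div_affine_sub_mul {α δ K C y : ℝ} (hα : α < 1) (hα0 : α ≠ 0)
    (hδ : 0 < δ) (hC : 0 < C) (hy : δ * C ^ (α - 1) ≤ y) :
    StrictAntiOn (fun x => (δ * (x - K) + C) ^ α / α - y * x) (Ici K) := by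
  have hderiv : ∀ x ∈ Ici K, HasDerivAt (fun x => (δ * (x - K) + C) ^ α / α - y * x)
      ((δ * (x - K) + C) ^ (α - 1) * δ - y) x := fun x hx => by
    have hpos : 0 < δ * (x - K) + C := by nlinarith [mem_Ici.mp hx]
    have hlin : HasDerivAt (fun x => δ * (x - K) + C) δ x := by
      simpa using (((hasDerivAt_id x).sub_const K).const_mul δ).add_const C
    have := ((hasDerivAt_rpow_div_self hα0 hpos).comp x hlin).sub
      ((hasDerivAt_id x).const_mul y)
    rwa [mul_one] at this
  refine strictAntiOn_of_hasDerivWithinAt_neg (convex_Ici K)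
    (fun x hx => (hderiv x hx).continuousAt.continuousWithinAt)
    (fun x hx => (hderiv x (interior_subset hx)).hasDerivWithinAt) fun x hx => ?_
  rw [interior_Ici, mem_Ioi] at hx
  have hlt : (δ * (x - K) + C) ^ (α - 1) < C ^ (α - 1) :=
    rpow_lt_rpow_of_neg hC (by nlinarith) (by linarith)
  nlinarith

theorem stmt3_general
    (α δ K C : ℝ) (hα : α < 1) (hα0 : α ≠ 0) (hδ : δ ∈ Set.Ioc (0:ℝ) 1)
    (hK : 0 < K) (hC : 0 < C)
    (u : ℝ → ℝ) (hu : ∀ x, u x = x ^ α / α)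
    (g : ℝ → ℝ) (hg : ∀ x, g x = δ * max (x - K) 0 + C)
    (L : ℝ → ℝ → ℝ) (hL : ∀ y x, L y x = u (g x) - y * x) :
    ∀ y, δ * C ^ (α - 1) ≤ y →
      StrictAntiOn (L y) (Set.Ici 0) ∧
      (∀ x > 0, L y x < u C) ∧
      L y 0 = u C ∧
      (∀ x, 0 ≤ x → (∀ x', 0 ≤ x' → L y x' ≤ L y x) → x = 0) := by
  intro y hy
  have hy0 : 0 < y := (mul_pos hδ.1 (rpow_pos_of_pos hC _)).trans_le hy
  have hflat : EqOn (fun x => u C - y * x) (L y) (Icc 0 K) := fun x hx => by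
    simp [hL, hg, max_eq_right (sub_nonpos.mpr hx.2)]
  have hcurved : EqOn (fun x => (δ * (x - K) + C) ^ α / α - y * x) (L y) (Ici K) := fun x hx => by
    simp [hL, hg, hu, max_eq_left (sub_nonneg.mpr (mem_Ici.mp hx))]
  have hanti : StrictAntiOn (L y) (Ici 0) := by
    rw [← Icc_union_Ici_eq_Ici hK.le]
    refine StrictAntiOn.union ?_ ?_ (isGreatest_Icc hK.le) isLeast_Ici
    · have hline : StrictAntiOn (fun x => u C - y * x) (Icc 0 K) := fun a _ b _ hab => by
        linarith [mul_lt_mul_of_pos_left hab hy0]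
      exact hline.congr hflat
    · exact (strictAntiOn_rpow_div_affine_sub_mul hα hα0 hδ.1 hC hy).congr hcurved
  have hL0 : L y 0 = u C := by simpa using (hflat ⟨le_rfl, hK.le⟩).symm
  refine ⟨hanti, fun x hx => hL0 ▸ hanti self_mem_Ici hx.le hx, hL0, fun x hx hmax => ?_⟩
  by_contra hne
  exact (hmax 0 le_rfl).not_gt (hanti self_mem_Ici hx (hx.lt_of_ne' hne))

/-- for y ≥ δ·C^{α−1}, x ↦ ℒ(y,x) = u(g(x)) − y·x is strictly
decreasing on [0,∞); in particular ℒ(y,x) < u(C) = ℒ(y,0) for every x > 0,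
so x = 0 is the unique maximizer of ℒ(y,·) on [0,∞). -/
theorem stmt3
    (α δ K C : ℝ) (hα : α < 1) (hα0 : α ≠ 0) (hδ : δ ∈ Set.Ioc (0:ℝ) 1)
    (hK : 0 < K) (hC : 0 < C)
    (u : ℝ → ℝ) (hu : ∀ x, u x = x ^ α / α)
    (g : ℝ → ℝ) (hg : ∀ x, g x = δ * max (x - K) 0 + C)
    (I : ℝ → ℝ) (hI : ∀ x, I x = x ^ (1 / (α - 1)))
    (h : ℝ → ℝ) (hh : ∀ y, h y = (I (y / δ) - C) / δ + K)
    (L : ℝ → ℝ → ℝ) (hL : ∀ y x, L y x = u (g x) - y * x) :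
    ∀ y, δ * C ^ (α - 1) ≤ y →
      StrictAntiOn (L y) (Set.Ici 0) ∧
      (∀ x > 0, L y x < u C) ∧
      L y 0 = u C ∧
      (∀ x, 0 ≤ x → (∀ x', 0 ≤ x' → L y x' ≤ L y x) → x = 0) :=
  stmt3_general α δ K C hα hα0 hδ hK hC u hu g hg L hL
end

section
/- For every y ∈ (0, δ·C^{α−1}), the function x ↦ ℒ(y,x) = u(g(x)) − y·x is strictly decreasing on [0,K], strictly increasing on [K, h(y)], and strictly decreasing on [h(y), ∞); consequently any maximizer of ℒ(y,·) over [0,∞) is either x = 0 or x = h(y). -/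
open Real Set

/-!
On `[0, K]` the payoff is the constant `C`, so `ℒ(y, ·)` has slope `-y`. Beyond `K`, the
substitution `t = δ (x - K) + C` turns `ℒ(y, ·)` into `t ↦ t ^ α / α - (y / δ) t` plus a constant.
Its derivative `t ^ (α - 1) - y / δ` is strictly decreasing and vanishes exactly at
`t = I (y / δ)`, the image of `x = h y`; the bound `y < δ C ^ (α - 1)` says this critical point
lies to the right of `t = C`, i.e. `K < h y`.
-/

section PowerUtility

variable {α s : ℝ}

theorem hasDerivAt_rpow_div_self_sub_mul (hα : α ≠ 0) {t : ℝ} (ht : 0 < t) :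
    HasDerivAt (fun t => t ^ α / α - s * t) (t ^ (α - 1) - s) t :=
  (((hasDerivAt_rpow_const (Or.inl ht.ne')).div_const α).sub
    ((hasDerivAt_id' t).const_mul s)).congr_deriv (by field_simp)

theorem continuousOn_rpow_div_self_sub_mul (hα : α ≠ 0) :
    ContinuousOn (fun t => t ^ α / α - s * t) (Ioi 0) := fun _ ht =>
  (hasDerivAt_rpow_div_self_sub_mul hα ht).continuousAt.continuousWithinAt

theorem strictMonoOn_rpow_div_self_sub_mul (hα : α < 1) (hα0 : α ≠ 0) (hs : 0 < s) :
    StrictMonoOn (fun t => t ^ α / α - s * t) (Ioc 0 (s ^ (α - 1)⁻¹)) := by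
  refine strictMonoOn_of_hasDerivWithinAt_pos (convex_Ioc _ _)
    ((continuousOn_rpow_div_self_sub_mul hα0).mono Ioc_subset_Ioi_self)
    (fun t ht => (hasDerivAt_rpow_div_self_sub_mul hα0 ?_).hasDerivWithinAt) fun t ht => ?_
  all_goals rw [interior_Ioc] at ht
  · exact ht.1
  · exact sub_pos.2 ((lt_rpow_inv_iff_of_neg ht.1 hs (by linarith)).1 ht.2)

theorem strictAntiOn_rpow_div_self_sub_mul (hα : α < 1) (hα0 : α ≠ 0) (hs : 0 < s) :
    StrictAntiOn (fun t => t ^ α / α - s * t) (Ici (s ^ (α - 1)⁻¹)) := by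
  have hcrit : 0 < s ^ (α - 1)⁻¹ := rpow_pos_of_pos hs _
  refine strictAntiOn_of_hasDerivWithinAt_neg (convex_Ici _)
    ((continuousOn_rpow_div_self_sub_mul hα0).mono (Ici_subset_Ioi.2 hcrit))
    (fun t ht => (hasDerivAt_rpow_div_self_sub_mul hα0 ?_).hasDerivWithinAt) fun t ht => ?_
  all_goals rw [interior_Ici] at ht
  · exact hcrit.trans ht
  · exact sub_neg.2 ((rpow_inv_lt_iff_of_neg hs (hcrit.trans ht) (by linarith)).1 ht)

end PowerUtility

theorem IsMaxOn.eq_or_eq_of_strictAntiOn_strictMonoOn_strictAntiOn {β γ : Type*}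
    [LinearOrder β] [Preorder γ] {f : β → γ} {a b c x : β} (hab : a ≤ b) (hbc : b ≤ c)
    (hdec : StrictAntiOn f (Icc a b)) (hinc : StrictMonoOn f (Icc b c))
    (hdec' : StrictAntiOn f (Ici c)) (hx : a ≤ x) (hmax : IsMaxOn f (Ici a) x) :
    x = a ∨ x = c := by
  have hmax' : ∀ z, a ≤ z → ¬ f x < f z := fun z hz => (hmax (mem_Ici.2 hz)).not_gt
  rcases le_or_gt x b with hxb | hbx
  · refine Or.inl (hx.eq_or_lt.resolve_right fun hax => ?_).symm
    exact hmax' a le_rfl (hdec ⟨le_rfl, hab⟩ ⟨hx, hxb⟩ hax)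
  rcases lt_trichotomy x c with hxc | hxc | hcx
  · exact absurd (hinc ⟨hbx.le, hxc.le⟩ ⟨hbc, le_rfl⟩ hxc) (hmax' c (hab.trans hbc))
  · exact Or.inr hxc
  · exact absurd (hdec' le_rfl hcx.le hcx) (hmax' c (hab.trans hbc))

/-- for every y ∈ (0, δ·C^{α−1}), x ↦ ℒ(y,x) is strictly
decreasing on [0,K], strictly increasing on [K, h(y)], strictly decreasing on
[h(y),∞); hence any maximizer of ℒ(y,·) on [0,∞) is 0 or h(y). -/
theorem stmt5
    (α δ K C : ℝ) (hα : α < 1) (hα0 : α ≠ 0) (hδ : δ ∈ Set.Ioc (0:ℝ) 1)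
    (hK : 0 < K) (hC : 0 < C)
    (u : ℝ → ℝ) (hu : ∀ x, u x = x ^ α / α)
    (g : ℝ → ℝ) (hg : ∀ x, g x = δ * max (x - K) 0 + C)
    (I : ℝ → ℝ) (hI : ∀ x, I x = x ^ (1 / (α - 1)))
    (h : ℝ → ℝ) (hh : ∀ y, h y = (I (y / δ) - C) / δ + K)
    (L : ℝ → ℝ → ℝ) (hL : ∀ y x, L y x = u (g x) - y * x) :
    ∀ y ∈ Set.Ioo 0 (δ * C ^ (α - 1)),
      StrictAntiOn (L y) (Set.Icc 0 K) ∧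
      StrictMonoOn (L y) (Set.Icc K (h y)) ∧
      StrictAntiOn (L y) (Set.Ici (h y)) ∧
      (∀ x, 0 ≤ x → (∀ x', 0 ≤ x' → L y x' ≤ L y x) → x = 0 ∨ x = h y) := by
  rintro y ⟨hy0, hyC⟩
  obtain ⟨hδ0, -⟩ := hδ
  have hs : 0 < y / δ := div_pos hy0 hδ0
  set a : ℝ → ℝ := fun x => δ * (x - K) + C with ha
  have ha_mono : StrictMono a := fun x₁ x₂ h12 => by simp only [ha]; gcongr
  have ha_crit : a (h y) = (y / δ) ^ (α - 1)⁻¹ := by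
    simp only [ha, hh, hI, one_div]; field_simp; ring
  have hCcrit : C < (y / δ) ^ (α - 1)⁻¹ :=
    (lt_rpow_inv_iff_of_neg hC hs (by linarith)).2 ((div_lt_iff₀' hδ0).2 hyC)
  have hKh : K < h y := ha_mono.lt_iff_lt.1 (by simpa [ha, ← ha_crit] using hCcrit)
  have hsmooth : ∀ x, K ≤ x → L y x =
      (fun t => t ^ α / α - y / δ * t) (a x) + y * (C / δ - K) := fun x hx => by
    simp only [hL, hg, hu, ha, max_eq_left (sub_nonneg.2 hx)]; field_simp; ring
  have hdec : StrictAntiOn (L y) (Icc 0 K) := fun x₁ hx₁ x₂ hx₂ h12 => by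
    simp only [hL, hg, max_eq_right (sub_nonpos.2 hx₁.2), max_eq_right (sub_nonpos.2 hx₂.2)]
    linarith [mul_lt_mul_of_pos_left h12 hy0]
  have hinc : StrictMonoOn (L y) (Icc K (h y)) :=
    (((strictMonoOn_rpow_div_self_sub_mul hα hα0 hs).comp (ha_mono.strictMonoOn _)
      fun x hx => ⟨add_pos_of_nonneg_of_pos (mul_nonneg hδ0.le (sub_nonneg.2 hx.1)) hC,
        ha_crit ▸ ha_mono.monotone hx.2⟩).add_const _).congr
      fun x hx => (hsmooth x hx.1).symm
  have hdec' : StrictAntiOn (L y) (Ici (h y)) :=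
    (((strictAntiOn_rpow_div_self_sub_mul hα hα0 hs).comp_strictMonoOn (ha_mono.strictMonoOn _)
      fun x hx => ha_crit ▸ ha_mono.monotone hx).add_const _).congr
      fun x hx => (hsmooth x (hKh.le.trans hx)).symm
  exact ⟨hdec, hinc, hdec', fun x hx hmax =>
    IsMaxOn.eq_or_eq_of_strictAntiOn_strictMonoOn_strictAntiOn hK.le hKh.le hdec hinc hdec' hx
      hmax⟩
end

section
/- For every y ∈ (0, δ·C^{α−1}), the function Δℒ is differentiable at y with derivative Δℒ'(y) = −h(y) < 0; consequently Δℒ is strictly decreasing on (0, δ·C^{α−1}]. -/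
/-!
On `(0, δ C^{α-1}]` we have `I (y / δ) ≥ C`, so `g (h y) = I (y / δ)` and `h y ≥ K`. For `y` in
the open interval, `h y > K` lies on the affine branch of `g`, where `u' (g (h y)) · δ = y`: so
`h y` is a critical point of the Lagrangian `ℒ(y, ·)`. By the envelope theorem the derivative of
`Δℒ (y) = ℒ(y, h y) - u C` is `∂ℒ/∂y = -h y ≤ -K < 0`.
-/

open Real Set Topology

/-- Envelope theorem: `hF` says that `x y` is a critical point of `x ↦ F x - y x`. -/
theorem HasDerivAt.envelope {F x : ℝ → ℝ} {x' y : ℝ} (hF : HasDerivAt F y (x y))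
    (hx : HasDerivAt x x' y) : HasDerivAt (fun z => F (x z) - z * x z) (-x y) y :=
  ((hF.comp y hx).sub ((hasDerivAt_id' y).mul hx)).congr_deriv (by ring)

noncomputable def powerUtility (α x : ℝ) : ℝ := x ^ α / α

noncomputable def optionPayoff (δ K C x : ℝ) : ℝ := δ * max (x - K) 0 + C

noncomputable def inverseMarginalUtility (α x : ℝ) : ℝ := x ^ (1 / (α - 1))

noncomputable def lagrangianMaximizer (α δ K C y : ℝ) : ℝ :=
  (inverseMarginalUtility α (y / δ) - C) / δ + K

noncomputable def lagrangianGap (α δ K C y : ℝ) : ℝ :=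
  powerUtility α (optionPayoff δ K C (lagrangianMaximizer α δ K C y)) - powerUtility α C -
    y * lagrangianMaximizer α δ K C y

variable {α δ K C x y : ℝ}

theorem hasDerivAt_powerUtility (hα : α ≠ 0) (hx : 0 < x) :
    HasDerivAt (powerUtility α) (x ^ (α - 1)) x :=
  ((hasDerivAt_rpow_const (Or.inl hx.ne')).div_const α).congr_deriv (by field_simp)

theorem continuousAt_powerUtility (hx : 0 < x) : ContinuousAt (powerUtility α) x :=
  (continuousAt_id.rpow_const (Or.inl hx.ne')).div_const α

theorem optionPayoff_pos (hδ : 0 ≤ δ) (hC : 0 < C) : 0 < optionPayoff δ K C x :=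
  add_pos_of_nonneg_of_pos (mul_nonneg hδ (le_max_right _ _)) hC

theorem continuous_optionPayoff : Continuous (optionPayoff δ K C) := by
  unfold optionPayoff
  fun_prop

theorem hasDerivAt_optionPayoff (hx : K < x) : HasDerivAt (optionPayoff δ K C) δ x := by
  have hlin : (fun z => δ * (z - K) + C) =ᶠ[𝓝 x] optionPayoff δ K C := by
    filter_upwards [lt_mem_nhds hx] with z hz
    rw [optionPayoff, max_eq_left (sub_nonneg.mpr hz.le)]
  refine HasDerivAt.congr_of_eventuallyEq ?_ hlin.symm
  simpa using (((hasDerivAt_id x).sub_const K).const_mul δ).add_const C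

theorem inverseMarginalUtility_rpow_sub_one (hα : α ≠ 1) (hx : 0 ≤ x) :
    inverseMarginalUtility α x ^ (α - 1) = x := by
  rw [inverseMarginalUtility, one_div, rpow_inv_rpow hx (sub_ne_zero.mpr hα)]

theorem le_inverseMarginalUtility_iff (hα : α < 1) (hC : 0 < C) (hx : 0 < x) :
    C ≤ inverseMarginalUtility α x ↔ x ≤ C ^ (α - 1) := by
  rw [inverseMarginalUtility, one_div, le_rpow_inv_iff_of_neg hC hx (by linarith)]

theorem lt_inverseMarginalUtility_iff (hα : α < 1) (hC : 0 < C) (hx : 0 < x) :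
    C < inverseMarginalUtility α x ↔ x < C ^ (α - 1) := by
  rw [inverseMarginalUtility, one_div, lt_rpow_inv_iff_of_neg hC hx (by linarith)]

theorem le_lagrangianMaximizer_iff (hδ : 0 < δ) :
    K ≤ lagrangianMaximizer α δ K C y ↔ C ≤ inverseMarginalUtility α (y / δ) := by
  rw [lagrangianMaximizer, le_add_iff_nonneg_left, le_div_iff₀ hδ, zero_mul, sub_nonneg]

theorem lt_lagrangianMaximizer_iff (hδ : 0 < δ) :
    K < lagrangianMaximizer α δ K C y ↔ C < inverseMarginalUtility α (y / δ) := by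
  rw [lagrangianMaximizer, lt_add_iff_pos_left, div_pos_iff_of_pos_right hδ, sub_pos]

theorem optionPayoff_lagrangianMaximizer (hδ : 0 < δ) :
    optionPayoff δ K C (lagrangianMaximizer α δ K C y) =
      max (inverseMarginalUtility α (y / δ)) C := by
  rw [optionPayoff, lagrangianMaximizer, add_sub_cancel_right, mul_max_of_nonneg _ _ hδ.le,
    mul_div_cancel₀ _ hδ.ne', mul_zero, ← max_add_add_right, sub_add_cancel, zero_add]

theorem continuousAt_lagrangianMaximizer (hδ : 0 < δ) (hy : 0 < y) :
    ContinuousAt (lagrangianMaximizer α δ K C) y :=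
  ((((continuousAt_id.div_const δ).rpow_const (Or.inl (div_pos hy hδ).ne')).sub
    continuousAt_const).div_const δ).add continuousAt_const

theorem differentiableAt_lagrangianMaximizer (hδ : 0 < δ) (hy : 0 < y) :
    DifferentiableAt ℝ (lagrangianMaximizer α δ K C) y :=
  ((((differentiableAt_id.div_const δ).rpow_const (Or.inl (div_pos hy hδ).ne')).sub_const
    C).div_const δ).add_const K

theorem le_lagrangianMaximizer (hα : α < 1) (hδ : 0 < δ) (hC : 0 < C)
    (hy : y ∈ Ioc 0 (δ * C ^ (α - 1))) :
    K ≤ lagrangianMaximizer α δ K C y := by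
  rw [le_lagrangianMaximizer_iff hδ, le_inverseMarginalUtility_iff hα hC (div_pos hy.1 hδ),
    div_le_iff₀' hδ]
  exact hy.2

/-- The first-order condition `∂ℒ/∂x (y, h y) = 0`. -/
theorem hasDerivAt_powerUtility_comp_optionPayoff (hα : α < 1) (hα0 : α ≠ 0) (hδ : 0 < δ)
    (hC : 0 < C) (hy : y ∈ Ioo 0 (δ * C ^ (α - 1))) :
    HasDerivAt (powerUtility α ∘ optionPayoff δ K C) y (lagrangianMaximizer α δ K C y) := by
  have hCI : C < inverseMarginalUtility α (y / δ) := by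
    rw [lt_inverseMarginalUtility_iff hα hC (div_pos hy.1 hδ), div_lt_iff₀' hδ]
    exact hy.2
  have hpayoff := optionPayoff_lagrangianMaximizer (α := α) (K := K) (C := C) (y := y) hδ
  rw [max_eq_left hCI.le] at hpayoff
  have hu : HasDerivAt (powerUtility α) (inverseMarginalUtility α (y / δ) ^ (α - 1))
      (optionPayoff δ K C (lagrangianMaximizer α δ K C y)) := by
    rw [hpayoff]
    exact hasDerivAt_powerUtility hα0 (hC.trans hCI)
  have hg : HasDerivAt (optionPayoff δ K C) δ (lagrangianMaximizer α δ K C y) :=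
    hasDerivAt_optionPayoff ((lt_lagrangianMaximizer_iff hδ).mpr hCI)
  refine (hu.comp _ hg).congr_deriv ?_
  rw [inverseMarginalUtility_rpow_sub_one hα.ne (div_pos hy.1 hδ).le, div_mul_cancel₀ _ hδ.ne']

theorem hasDerivAt_lagrangianGap (hα : α < 1) (hα0 : α ≠ 0) (hδ : 0 < δ) (hC : 0 < C)
    (hy : y ∈ Ioo 0 (δ * C ^ (α - 1))) :
    HasDerivAt (lagrangianGap α δ K C) (-lagrangianMaximizer α δ K C y) y := by
  have hgap : lagrangianGap α δ K C = fun z =>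
      (powerUtility α ∘ optionPayoff δ K C) (lagrangianMaximizer α δ K C z) -
        z * lagrangianMaximizer α δ K C z - powerUtility α C := by
    funext z
    rw [lagrangianGap, Function.comp_apply]
    ring
  rw [hgap]
  exact ((hasDerivAt_powerUtility_comp_optionPayoff hα hα0 hδ hC hy).envelope
    (differentiableAt_lagrangianMaximizer hδ hy.1).hasDerivAt).sub_const _

theorem continuousAt_lagrangianGap (hδ : 0 < δ) (hC : 0 < C) (hy : 0 < y) :
    ContinuousAt (lagrangianGap α δ K C) y := by
  have hh := continuousAt_lagrangianMaximizer (α := α) (K := K) (C := C) hδ hy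
  have hgh := (continuous_optionPayoff (δ := δ) (K := K) (C := C)).continuousAt.comp (x := y) hh
  have hugh := (continuousAt_powerUtility (α := α)
    (optionPayoff_pos (K := K) (x := lagrangianMaximizer α δ K C y) hδ.le hC)).comp (x := y) hgh
  exact (hugh.sub continuousAt_const).sub ((continuousAt_id (x := y)).mul hh)

/-- for every y ∈ (0, δ·C^{α−1}), Δℒ is differentiable at y with
Δℒ'(y) = −h(y) < 0; consequently Δℒ is strictly decreasing on (0, δ·C^{α−1}]. -/
theorem stmt6
    (α δ K C : ℝ) (hα : α < 1) (hα0 : α ≠ 0) (hδ : δ ∈ Set.Ioc (0:ℝ) 1)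
    (hK : 0 < K) (hC : 0 < C)
    (u : ℝ → ℝ) (hu : ∀ x, u x = x ^ α / α)
    (g : ℝ → ℝ) (hg : ∀ x, g x = δ * max (x - K) 0 + C)
    (I : ℝ → ℝ) (hI : ∀ x, I x = x ^ (1 / (α - 1)))
    (h : ℝ → ℝ) (hh : ∀ y, h y = (I (y / δ) - C) / δ + K)
    (ΔL : ℝ → ℝ) (hΔL : ∀ y, ΔL y = u (g (h y)) - u C - y * h y) :
    (∀ y ∈ Set.Ioo 0 (δ * C ^ (α - 1)), HasDerivAt ΔL (-h y) y ∧ -h y < 0) ∧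
      StrictAntiOn ΔL (Set.Ioc 0 (δ * C ^ (α - 1))) := by
  obtain ⟨hδ0, -⟩ := hδ
  obtain rfl : u = powerUtility α := funext hu
  obtain rfl : g = optionPayoff δ K C := funext hg
  obtain rfl : I = inverseMarginalUtility α := funext hI
  obtain rfl : h = lagrangianMaximizer α δ K C := funext hh
  obtain rfl : ΔL = lagrangianGap α δ K C := funext hΔL
  have hneg : ∀ y ∈ Ioc 0 (δ * C ^ (α - 1)), -lagrangianMaximizer α δ K C y < 0 :=
    fun y hy => neg_neg_of_pos (hK.trans_le (le_lagrangianMaximizer hα hδ0 hC hy))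
  refine ⟨fun y hy => ⟨hasDerivAt_lagrangianGap hα hα0 hδ0 hC hy,
    hneg y (Ioo_subset_Ioc_self hy)⟩, strictAntiOn_of_deriv_neg (convex_Ioc _ _) ?_ ?_⟩
  · exact fun y hy => (continuousAt_lagrangianGap hδ0 hC hy.1).continuousWithinAt
  · intro y hy
    rw [interior_Ioc] at hy
    rw [(hasDerivAt_lagrangianGap hα hα0 hδ0 hC hy).deriv]
    exact hneg y (Ioo_subset_Ioc_self hy)
end

section
/- If additionally 0 < α < 1, then Δℒ(y) → +∞ as y → 0⁺. -/
open Real Set Filter Topology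

/-!
Writing `t = I(y/δ) = (y/δ)^(1/(α-1))`, we have `t → ∞` as `y → 0⁺`, so eventually `t ≥ C`;
then `h y` lies in the linear part of the payoff and `g (h y) = t`. Since `t^α = (y/δ)·t = (y/δ)^(α/(α-1))`,
`Δℒ(y) = (1/α - 1)(y/δ)^(α/(α-1)) + y (C/δ - K) - C^α/α`, and the exponent `α/(α-1)` is negative,
so the leading term blows up with positive coefficient `1/α - 1`.
-/

lemma tendsto_div_const_rpow_nhdsGT_zero {c e : ℝ} (hc : 0 < c) (he : e < 0) :
    Tendsto (fun y : ℝ => (y / c) ^ e) (𝓝[>] 0) atTop := by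
  have hdiv : Tendsto (· / c) (𝓝[>] (0 : ℝ)) (𝓝[>] 0) :=
    tendsto_nhdsWithin_iff.2
      ⟨((continuous_id.div_const c).tendsto' 0 0 (zero_div c)).mono_left nhdsWithin_le_nhds,
        eventually_mem_nhdsWithin.mono fun y hy => div_pos hy hc⟩
  exact (tendsto_rpow_neg_nhdsGT_zero he).comp hdiv

lemma rpow_one_div_sub_one_rpow {x α : ℝ} (hx : 0 ≤ x) :
    (x ^ (1 / (α - 1))) ^ α = x ^ (α / (α - 1)) := by
  rw [← rpow_mul hx, one_div_mul_eq_div]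

lemma mul_rpow_one_div_sub_one {x α : ℝ} (hx : 0 < x) (hα : α ≠ 1) :
    x * x ^ (1 / (α - 1)) = x ^ (α / (α - 1)) := by
  have hα' : α - 1 ≠ 0 := sub_ne_zero.2 hα
  calc x * x ^ (1 / (α - 1)) = x ^ (1 + 1 / (α - 1)) := by rw [rpow_add hx, rpow_one]
    _ = x ^ (α / (α - 1)) := by rw [one_add_div hα', sub_add_cancel]

lemma option_payoff_eq {δ K C t : ℝ} (hδ : 0 < δ) (ht : C ≤ t) :
    δ * max ((t - C) / δ + K - K) 0 + C = t := by
  rw [add_sub_cancel_right, max_eq_left (div_nonneg (sub_nonneg.2 ht) hδ.le)]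
  field_simp
  ring

lemma deltaL_eq_of_le {α δ K C y : ℝ} (hα : α ≠ 1) (hδ : 0 < δ) (hy : 0 < y)
    (ht : C ≤ (y / δ) ^ (1 / (α - 1))) :
    (δ * max (((y / δ) ^ (1 / (α - 1)) - C) / δ + K - K) 0 + C) ^ α / α - C ^ α / α
        - y * (((y / δ) ^ (1 / (α - 1)) - C) / δ + K)
      = (1 / α - 1) * (y / δ) ^ (α / (α - 1)) + (y * (C / δ - K) - C ^ α / α) := by
  have hyδ : 0 < y / δ := div_pos hy hδ
  rw [option_payoff_eq hδ ht, rpow_one_div_sub_one_rpow hyδ.le]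
  have hlin : y * ((y / δ) ^ (1 / (α - 1)) / δ) = (y / δ) ^ (α / (α - 1)) := by
    rw [← mul_rpow_one_div_sub_one hyδ hα]
    ring
  linear_combination -hlin

theorem stmt8_general
    (α δ K C : ℝ) (hα : α < 1) (hδ : δ ∈ Set.Ioc (0:ℝ) 1)
    (u : ℝ → ℝ) (hu : ∀ x, u x = x ^ α / α)
    (g : ℝ → ℝ) (hg : ∀ x, g x = δ * max (x - K) 0 + C)
    (I : ℝ → ℝ) (hI : ∀ x, I x = x ^ (1 / (α - 1)))
    (h : ℝ → ℝ) (hh : ∀ y, h y = (I (y / δ) - C) / δ + K)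
    (ΔL : ℝ → ℝ) (hΔL : ∀ y, ΔL y = u (g (h y)) - u C - y * h y)
    (hαpos : 0 < α) :
    Tendsto ΔL (nhdsWithin 0 (Set.Ioi 0)) atTop := by
  have hδ0 : 0 < δ := hδ.1
  have hI_ge : ∀ᶠ y in 𝓝[>] 0, C ≤ (y / δ) ^ (1 / (α - 1)) :=
    (tendsto_div_const_rpow_nhdsGT_zero hδ0 (one_div_neg.2 (by linarith))).eventually_ge_atTop C
  have hΔL_eq : ΔL =ᶠ[𝓝[>] 0]
      fun y => (1 / α - 1) * (y / δ) ^ (α / (α - 1)) + (y * (C / δ - K) - C ^ α / α) := by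
    filter_upwards [hI_ge, self_mem_nhdsWithin] with y hyC hy
    rw [hΔL, hu, hu, hh, hg, hI]
    exact deltaL_eq_of_le hα.ne hδ0 hy hyC
  have hcoeff : 0 < 1 / α - 1 := by
    linarith [(one_lt_div hαpos).2 hα]
  have hlead := (tendsto_div_const_rpow_nhdsGT_zero hδ0
    (div_neg_of_pos_of_neg hαpos (show α - 1 < 0 by linarith))).const_mul_atTop hcoeff
  have hrest : Tendsto (fun y : ℝ => y * (C / δ - K) - C ^ α / α) (𝓝[>] 0)
      (𝓝 (0 * (C / δ - K) - C ^ α / α)) :=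
    ((continuous_id.mul continuous_const).sub continuous_const).continuousAt.tendsto.mono_left
      nhdsWithin_le_nhds
  exact (hlead.atTop_add hrest).congr' hΔL_eq.symm

/-- if additionally 0 < α < 1, then Δℒ(y) → +∞ as y → 0⁺. -/
theorem stmt8
    (α δ K C : ℝ) (hα : α < 1) (hα0 : α ≠ 0) (hδ : δ ∈ Set.Ioc (0:ℝ) 1)
    (hK : 0 < K) (hC : 0 < C)
    (u : ℝ → ℝ) (hu : ∀ x, u x = x ^ α / α)
    (g : ℝ → ℝ) (hg : ∀ x, g x = δ * max (x - K) 0 + C)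
    (I : ℝ → ℝ) (hI : ∀ x, I x = x ^ (1 / (α - 1)))
    (h : ℝ → ℝ) (hh : ∀ y, h y = (I (y / δ) - C) / δ + K)
    (ΔL : ℝ → ℝ) (hΔL : ∀ y, ΔL y = u (g (h y)) - u C - y * h y)
    (hαpos : 0 < α) :
    Tendsto ΔL (nhdsWithin 0 (Set.Ioi 0)) atTop :=
  stmt8_general α δ K C hα hδ u hu g hg I hI h hh ΔL hΔL hαpos
end

section
/- For every measurable density ρ : Ω → (0,∞) with ∫ ρ dP = 1, one has (∫ f^λ dP)^{1/λ} ≤ (∫ f·ρ dP)·(∫ ρ^{λ/(λ−1)} dP)^{(1−λ)/λ}, where the right-hand side is interpreted as +∞ if either integral is infinite; equality holds for the density ρ* = f^{λ−1} / ∫ f^{λ−1} dP. Consequently (∫ f^λ dP)^{1/λ} equals the infimum of the right-hand side over all such densities ρ. -/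
/-!
Write `f ^ λ = (f ρ) ^ λ · ρ ^ (-λ)`; Hölder's inequality with the conjugate exponents `1 / λ` and
`1 / (1 - λ)` then bounds `∫ f ^ λ` by `(∫ f ρ) ^ λ (∫ ρ ^ (λ / (λ - 1))) ^ (1 - λ)`, for every
positive `ρ`. The right-hand side of the resulting bound is invariant under `ρ ↦ ρ / t`, and for
`ρ = f ^ (λ - 1)` both of its integrals equal `∫ f ^ λ`, so the normalized density `ρ*` attains it.
-/

open Real Set MeasureTheory
open scoped ENNReal

namespace ENNReal

theorem lintegral_rpow_rpow_le_lintegral_mul_mul {α : Type*} [MeasurableSpace α]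
    (μ : Measure α) {l : ℝ} (hl : l ∈ Ioo 0 1) {F R : α → ℝ≥0∞}
    (hF : AEMeasurable F μ) (hR : AEMeasurable R μ) (hR0 : ∀ a, R a ≠ 0) (hRtop : ∀ a, R a ≠ ⊤) :
    (∫⁻ a, F a ^ l ∂μ) ^ (1 / l) ≤
      (∫⁻ a, F a * R a ∂μ) * (∫⁻ a, R a ^ (l / (l - 1)) ∂μ) ^ ((1 - l) / l) := by
  obtain ⟨hl0, hl1⟩ := hl
  have hpq : Real.HolderConjugate (1 / l) (1 / (1 - l)) := by
    rw [Real.holderConjugate_iff]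
    constructor
    · rw [lt_div_iff₀ hl0]; linarith
    · rw [one_div, one_div, inv_inv, inv_inv]; ring
  have holder := lintegral_mul_le_Lp_mul_Lq μ hpq ((hF.mul hR).pow_const l) (hR.pow_const (-l))
  have hsplit : ∀ a, (F a * R a) ^ l * R a ^ (-l) = F a ^ l := by
    intro a
    rw [mul_rpow_of_nonneg _ _ hl0.le, mul_assoc, ← rpow_add l (-l) (hR0 a) (hRtop a),
      add_neg_cancel, rpow_zero, mul_one]
  have hpow_mul : ∀ a, ((F a * R a) ^ l) ^ (1 / l) = F a * R a := fun a => by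
    rw [← rpow_mul, mul_one_div_cancel hl0.ne', rpow_one]
  have hpow_neg : ∀ a, (R a ^ (-l)) ^ (1 / (1 - l)) = R a ^ (l / (l - 1)) := fun a => by
    rw [← rpow_mul]
    congr 1
    have : l - 1 ≠ 0 := by linarith
    field_simp
    ring
  simp only [Pi.mul_apply, hsplit, hpow_mul, hpow_neg, one_div_one_div] at holder
  have h1l : 0 ≤ 1 / l := one_div_nonneg.2 hl0.le
  calc (∫⁻ a, F a ^ l ∂μ) ^ (1 / l)
      ≤ ((∫⁻ a, F a * R a ∂μ) ^ l * (∫⁻ a, R a ^ (l / (l - 1)) ∂μ) ^ (1 - l)) ^ (1 / l) :=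
        rpow_le_rpow holder h1l
    _ = _ := by
        rw [mul_rpow_of_nonneg _ _ h1l, ← rpow_mul, ← rpow_mul, mul_one_div_cancel hl0.ne',
          rpow_one, mul_one_div]

end ENNReal

theorem integral_pos_of_forall_pos {α : Type*} [MeasurableSpace α] {μ : Measure α} [NeZero μ]
    {g : α → ℝ} (hg : ∀ a, 0 < g a) (hgi : Integrable g μ) : 0 < ∫ a, g a ∂μ := by
  have hsupp : Function.support g = univ := eq_univ_of_forall fun a => (hg a).ne'
  rw [integral_pos_iff_support_of_nonneg (fun a => (hg a).le) hgi, hsupp, Measure.measure_univ_pos]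
  exact NeZero.ne μ

theorem lintegral_ofReal_div_integral_self {α : Type*} [MeasurableSpace α] {μ : Measure α}
    {g : α → ℝ} (hg : ∀ a, 0 ≤ g a) (hgi : Integrable g μ) (hg0 : ∫ a, g a ∂μ ≠ 0) :
    ∫⁻ a, ENNReal.ofReal (g a / ∫ x, g x ∂μ) ∂μ = 1 := by
  rw [← ofReal_integral_eq_lintegral_ofReal (hgi.div_const _)
    (ae_of_all _ fun a => div_nonneg (hg a) (integral_nonneg hg)), integral_div, div_self hg0,
    ENNReal.ofReal_one]

/-- For a density `ρ = dQ/dP`, this is `E_Q[f] · R(Q, 1)` with the penalty `R` of the power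
aggregator. -/
noncomputable def robustPowerBound {α : Type*} [MeasurableSpace α] (μ : Measure α) (l : ℝ)
    (f ρ : α → ℝ) : ℝ≥0∞ :=
  (∫⁻ a, ENNReal.ofReal (f a * ρ a) ∂μ) *
    (∫⁻ a, ENNReal.ofReal (ρ a ^ (l / (l - 1))) ∂μ) ^ ((1 - l) / l)

section robustPowerBound

variable {α : Type*} [MeasurableSpace α] (μ : Measure α) {l : ℝ} {f ρ : α → ℝ}

theorem lintegral_ofReal_rpow_rpow_le_robustPowerBound (hl : l ∈ Ioo 0 1) (hf : Measurable f) (hf0 : ∀ a, 0 ≤ f a)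
    (hρ : Measurable ρ) (hρ0 : ∀ a, 0 < ρ a) :
    (∫⁻ a, ENNReal.ofReal (f a ^ l) ∂μ) ^ (1 / l) ≤ robustPowerBound μ l f ρ := by
  have hfl : ∀ a, ENNReal.ofReal (f a ^ l) = ENNReal.ofReal (f a) ^ l := fun a =>
    (ENNReal.ofReal_rpow_of_nonneg (hf0 a) hl.1.le).symm
  have hfρ : ∀ a, ENNReal.ofReal (f a * ρ a) = ENNReal.ofReal (f a) * ENNReal.ofReal (ρ a) :=
    fun a => ENNReal.ofReal_mul (hf0 a)
  have hρq : ∀ a, ENNReal.ofReal (ρ a ^ (l / (l - 1))) = ENNReal.ofReal (ρ a) ^ (l / (l - 1)) :=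
    fun a => (ENNReal.ofReal_rpow_of_pos (hρ0 a)).symm
  simp only [robustPowerBound, hfl, hfρ, hρq]
  exact ENNReal.lintegral_rpow_rpow_le_lintegral_mul_mul μ hl hf.ennreal_ofReal.aemeasurable
    hρ.ennreal_ofReal.aemeasurable (fun a => (ENNReal.ofReal_pos.2 (hρ0 a)).ne')
    (fun _ => ENNReal.ofReal_ne_top)

theorem robustPowerBound_div_const (hl : l ∈ Ioo 0 1) (hρ0 : ∀ a, 0 ≤ ρ a) {t : ℝ} (ht : 0 < t) :
    robustPowerBound μ l f (fun a => ρ a / t) = robustPowerBound μ l f ρ := by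
  obtain ⟨hl0, hl1⟩ := hl
  have hl1' : l - 1 ≠ 0 := by linarith
  have hmean : ∀ a, ENNReal.ofReal (f a * (ρ a / t)) =
      ENNReal.ofReal (f a * ρ a) * ENNReal.ofReal t⁻¹ := fun a => by
    rw [← ENNReal.ofReal_mul' (inv_nonneg.2 ht.le)]
    ring_nf
  have hnorm : ∀ a, ENNReal.ofReal ((ρ a / t) ^ (l / (l - 1))) =
      ENNReal.ofReal (ρ a ^ (l / (l - 1))) * ENNReal.ofReal (t ^ (-(l / (l - 1)))) := fun a => by
    rw [← ENNReal.ofReal_mul' (Real.rpow_nonneg ht.le _), Real.div_rpow (hρ0 a) ht.le,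
      Real.rpow_neg ht.le, div_eq_mul_inv]
  have hscale : ENNReal.ofReal (t ^ (-(l / (l - 1)))) ^ ((1 - l) / l) = ENNReal.ofReal t := by
    rw [ENNReal.ofReal_rpow_of_pos (Real.rpow_pos_of_pos ht _), ← Real.rpow_mul ht.le,
      show -(l / (l - 1)) * ((1 - l) / l) = 1 by field_simp; ring, Real.rpow_one]
  simp only [robustPowerBound, hmean, hnorm]
  rw [lintegral_mul_const' _ _ ENNReal.ofReal_ne_top, lintegral_mul_const' _ _ ENNReal.ofReal_ne_top,
    ENNReal.mul_rpow_of_nonneg _ _ (div_nonneg (by linarith) hl0.le), hscale,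
    mul_mul_mul_comm, ← ENNReal.ofReal_mul (inv_nonneg.2 ht.le), inv_mul_cancel₀ ht.ne',
    ENNReal.ofReal_one, mul_one]

theorem robustPowerBound_rpow_sub_one (hl : l ∈ Ioo 0 1) (hf0 : ∀ a, 0 < f a) :
    robustPowerBound μ l f (fun a => f a ^ (l - 1)) =
      (∫⁻ a, ENNReal.ofReal (f a ^ l) ∂μ) ^ (1 / l) := by
  obtain ⟨hl0, hl1⟩ := hl
  have hmean : ∀ a, f a * f a ^ (l - 1) = f a ^ l := fun a => by
    rw [Real.rpow_sub_one (hf0 a).ne', mul_div_cancel₀ _ (hf0 a).ne']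
  have hnorm : ∀ a, (f a ^ (l - 1)) ^ (l / (l - 1)) = f a ^ l := fun a => by
    rw [← Real.rpow_mul (hf0 a).le, mul_div_cancel₀ _ (by linarith)]
  simp only [robustPowerBound, hmean, hnorm]
  rw [show 1 / l = 1 + (1 - l) / l by field_simp; ring,
    ENNReal.rpow_add_of_nonneg _ _ zero_le_one (div_nonneg (by linarith) hl0.le), ENNReal.rpow_one]

end robustPowerBound

theorem stmt13_general {Ω : Type*} [MeasurableSpace Ω]
    (P : Measure Ω) [IsProbabilityMeasure P]
    (l : ℝ) (hl : l ∈ Set.Ioo (0 : ℝ) 1)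
    (f : Ω → ℝ) (hf : Measurable f) (hfpos : ∀ ω, 0 < f ω)
    (hfl1 : Integrable (fun ω => f ω ^ (l - 1)) P) :
    IsLeast {v : ℝ≥0∞ | ∃ ρ : Ω → ℝ, Measurable ρ ∧ (∀ ω, 0 < ρ ω) ∧
          (∫⁻ ω, ENNReal.ofReal (ρ ω) ∂P) = 1 ∧
          v = (∫⁻ ω, ENNReal.ofReal (f ω * ρ ω) ∂P) *
              (∫⁻ ω, ENNReal.ofReal (ρ ω ^ (l / (l - 1))) ∂P) ^ ((1 - l) / l)}
        ((∫⁻ ω, ENNReal.ofReal (f ω ^ l) ∂P) ^ (1 / l)) ∧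
      ((∫⁻ ω, ENNReal.ofReal (f ω ^ l) ∂P) ^ (1 / l) =
        (∫⁻ ω, ENNReal.ofReal
            (f ω * (f ω ^ (l - 1) / ∫ x, f x ^ (l - 1) ∂P)) ∂P) *
          (∫⁻ ω, ENNReal.ofReal
              ((f ω ^ (l - 1) / ∫ x, f x ^ (l - 1) ∂P) ^ (l / (l - 1))) ∂P)
            ^ ((1 - l) / l)) := by
  have hpow_pos : ∀ ω, 0 < f ω ^ (l - 1) := fun ω => Real.rpow_pos_of_pos (hfpos ω) _
  have hc : 0 < ∫ x, f x ^ (l - 1) ∂P := integral_pos_of_forall_pos hpow_pos hfl1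
  have hopt : (∫⁻ ω, ENNReal.ofReal (f ω ^ l) ∂P) ^ (1 / l) =
      robustPowerBound P l f (fun ω => f ω ^ (l - 1) / ∫ x, f x ^ (l - 1) ∂P) := by
    rw [robustPowerBound_div_const P hl (fun ω => (hpow_pos ω).le) hc,
      robustPowerBound_rpow_sub_one P hl hfpos]
  refine ⟨⟨⟨_, (hf.pow_const _).div_const _, fun ω => div_pos (hpow_pos ω) hc,
    lintegral_ofReal_div_integral_self (fun ω => (hpow_pos ω).le) hfl1 hc.ne', hopt⟩, ?_⟩, hopt⟩
  rintro v ⟨ρ, hρ, hρ0, -, rfl⟩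
  exact lintegral_ofReal_rpow_rpow_le_robustPowerBound P hl hf (fun ω => (hfpos ω).le) hρ hρ0

/-- reverse-Hölder robust representation of the power aggregator.
For every positive density ρ with ∫ ρ dP = 1,
(∫ f^λ dP)^{1/λ} ≤ (∫ f·ρ dP)·(∫ ρ^{λ/(λ−1)} dP)^{(1−λ)/λ} (in ℝ≥0∞, so the
right-hand side is +∞ when an integral is infinite); equality holds for
ρ* = f^{λ−1}/∫ f^{λ−1} dP, hence the left-hand side is the least element of
the set of right-hand values. -/
theorem stmt13 {Ω : Type*} [MeasurableSpace Ω]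
    (P : Measure Ω) [IsProbabilityMeasure P]
    (l : ℝ) (hl : l ∈ Set.Ioo (0 : ℝ) 1)
    (f : Ω → ℝ) (hf : Measurable f) (hfpos : ∀ ω, 0 < f ω)
    (hfl : Integrable (fun ω => f ω ^ l) P)
    (hfl1 : Integrable (fun ω => f ω ^ (l - 1)) P) :
    IsLeast {v : ℝ≥0∞ | ∃ ρ : Ω → ℝ, Measurable ρ ∧ (∀ ω, 0 < ρ ω) ∧
          (∫⁻ ω, ENNReal.ofReal (ρ ω) ∂P) = 1 ∧
          v = (∫⁻ ω, ENNReal.ofReal (f ω * ρ ω) ∂P) *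
              (∫⁻ ω, ENNReal.ofReal (ρ ω ^ (l / (l - 1))) ∂P) ^ ((1 - l) / l)}
        ((∫⁻ ω, ENNReal.ofReal (f ω ^ l) ∂P) ^ (1 / l)) ∧
      ((∫⁻ ω, ENNReal.ofReal (f ω ^ l) ∂P) ^ (1 / l) =
        (∫⁻ ω, ENNReal.ofReal
            (f ω * (f ω ^ (l - 1) / ∫ x, f x ^ (l - 1) ∂P)) ∂P) *
          (∫⁻ ω, ENNReal.ofReal
              ((f ω ^ (l - 1) / ∫ x, f x ^ (l - 1) ∂P) ^ (l / (l - 1))) ∂P)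
            ^ ((1 - l) / l)) :=
  stmt13_general P l hl f hf hfpos hfl1
end

section
/- For every measurable density ρ : Ω → (0,∞) with ∫ ρ dP = 1 and log ρ ∈ L¹(P), one has ∫ f·ρ dP ≥ exp(∫ log f dP + ∫ log ρ dP) (allowing the left-hand side to be +∞); equivalently exp(∫ log f dP) ≤ (∫ f·ρ dP)·exp(−∫ log ρ dP). Equality holds for the density ρ* = f^{−1} / ∫ f^{−1} dP, so exp(∫ log f dP) equals the infimum of (∫ f·ρ dP)·exp(−∫ log ρ dP) over all such ρ. -/
open Real Set MeasureTheory
open scoped ENNReal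

/-!
By Jensen's inequality for `exp`, the geometric mean `exp (∫ log g)` of a positive function is at
most its arithmetic mean `∫ g`. Applied to `g = f ρ`, this gives
`exp (∫ log f + ∫ log ρ) ≤ ∫ f ρ` for every density `ρ`. For `ρ ∝ f⁻¹` the product `f ρ` is
constant, so Jensen's inequality is an equality and the lower bound is attained.
-/

theorem log_inv_div_eq_neg_add {x c : ℝ} (hx : x ≠ 0) (hc : c ≠ 0) :
    log (x⁻¹ / c) = -(log x + log c) := by
  rw [log_div (inv_ne_zero hx) hc, log_inv, neg_add']

section

variable {Ω : Type*} [MeasurableSpace Ω] {P : Measure Ω}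

theorem integral_pos_of_forall_pos_s14 [NeZero P] {h : Ω → ℝ} (hpos : ∀ ω, 0 < h ω)
    (hint : Integrable h P) : 0 < ∫ ω, h ω ∂P := by
  rw [integral_pos_iff_support_of_nonneg (fun ω => (hpos ω).le) hint,
    Function.support_eq_univ fun ω => (hpos ω).ne']
  simp [NeZero.ne P]

theorem lintegral_ofReal_div_integral_self_s14 {h : Ω → ℝ} (hint : Integrable h P)
    (hnonneg : 0 ≤ᵐ[P] h) (hne : ∫ ω, h ω ∂P ≠ 0) :
    ∫⁻ ω, ENNReal.ofReal (h ω / ∫ x, h x ∂P) ∂P = 1 := by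
  rw [← ofReal_integral_eq_lintegral_ofReal (hint.div_const _)
      (hnonneg.mono fun ω hω => div_nonneg hω (integral_nonneg_of_ae hnonneg)),
    integral_div, div_self hne, ENNReal.ofReal_one]

theorem integrable_log_inv_div_const [IsFiniteMeasure P] {f : Ω → ℝ} (hf : ∀ᵐ ω ∂P, 0 < f ω)
    (hlogf : Integrable (fun ω => log (f ω)) P) {c : ℝ} (hc : 0 < c) :
    Integrable (fun ω => log ((f ω)⁻¹ / c)) P :=
  (hlogf.add (integrable_const _)).neg.congr <| hf.mono fun _ hω =>
    (log_inv_div_eq_neg_add hω.ne' hc.ne').symm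

variable [IsProbabilityMeasure P]

theorem ofReal_exp_integral_log_le_lintegral {g : Ω → ℝ} (hpos : ∀ᵐ ω ∂P, 0 < g ω)
    (hlog : Integrable (fun ω => log (g ω)) P) :
    ENNReal.ofReal (exp (∫ ω, log (g ω) ∂P)) ≤ ∫⁻ ω, ENNReal.ofReal (g ω) ∂P := by
  have hexp : (fun ω => exp (log (g ω))) =ᵐ[P] g := hpos.mono fun ω hω => exp_log hω
  by_cases hint : Integrable g P
  · rw [← ofReal_integral_eq_lintegral_ofReal hint (hpos.mono fun ω hω => hω.le)]
    refine ENNReal.ofReal_le_ofReal ?_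
    calc exp (∫ ω, log (g ω) ∂P)
        ≤ ∫ ω, exp (log (g ω)) ∂P :=
          convexOn_exp.map_integral_le continuous_exp.continuousOn isClosed_univ
            (.of_forall fun _ => mem_univ _) hlog (hint.congr hexp.symm)
      _ = ∫ ω, g ω ∂P := integral_congr_ae hexp
  · have hmeas : AEStronglyMeasurable g P :=
      (continuous_exp.comp_aestronglyMeasurable hlog.aestronglyMeasurable).congr hexp
    have htop : ∫⁻ ω, ENNReal.ofReal (g ω) ∂P = ∞ := by
      by_contra hne
      exact hint ((lintegral_ofReal_ne_top_iff_integrable hmeas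
        (hpos.mono fun ω hω => hω.le)).1 hne)
    rw [htop]
    exact le_top

theorem ofReal_exp_integral_log_add_le_lintegral_mul {f ρ : Ω → ℝ}
    (hf : ∀ᵐ ω ∂P, 0 < f ω) (hρ : ∀ᵐ ω ∂P, 0 < ρ ω)
    (hlogf : Integrable (fun ω => log (f ω)) P) (hlogρ : Integrable (fun ω => log (ρ ω)) P) :
    ENNReal.ofReal (exp ((∫ ω, log (f ω) ∂P) + ∫ ω, log (ρ ω) ∂P)) ≤
      ∫⁻ ω, ENNReal.ofReal (f ω * ρ ω) ∂P := by
  have hlog_mul : (fun ω => log (f ω) + log (ρ ω)) =ᵐ[P] fun ω => log (f ω * ρ ω) := by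
    filter_upwards [hf, hρ] with ω hfω hρω
    exact (log_mul hfω.ne' hρω.ne').symm
  rw [← integral_add hlogf hlogρ, integral_congr_ae hlog_mul]
  exact ofReal_exp_integral_log_le_lintegral
    (by filter_upwards [hf, hρ] with ω hfω hρω using mul_pos hfω hρω)
    ((hlogf.add hlogρ).congr hlog_mul)

theorem ofReal_exp_integral_log_le_lintegral_mul_exp_neg {f ρ : Ω → ℝ}
    (hf : ∀ᵐ ω ∂P, 0 < f ω) (hρ : ∀ᵐ ω ∂P, 0 < ρ ω)
    (hlogf : Integrable (fun ω => log (f ω)) P) (hlogρ : Integrable (fun ω => log (ρ ω)) P) :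
    ENNReal.ofReal (exp (∫ ω, log (f ω) ∂P)) ≤
      (∫⁻ ω, ENNReal.ofReal (f ω * ρ ω) ∂P) *
        ENNReal.ofReal (exp (-∫ ω, log (ρ ω) ∂P)) := by
  calc ENNReal.ofReal (exp (∫ ω, log (f ω) ∂P))
      = ENNReal.ofReal (exp ((∫ ω, log (f ω) ∂P) + ∫ ω, log (ρ ω) ∂P)) *
          ENNReal.ofReal (exp (-∫ ω, log (ρ ω) ∂P)) := by
        rw [← ENNReal.ofReal_mul (exp_nonneg _), ← exp_add, add_neg_cancel_right]
    _ ≤ _ := by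
        gcongr
        exact ofReal_exp_integral_log_add_le_lintegral_mul hf hρ hlogf hlogρ

theorem lintegral_mul_exp_neg_of_inv_div_const {f : Ω → ℝ} (hf : ∀ᵐ ω ∂P, 0 < f ω)
    (hlogf : Integrable (fun ω => log (f ω)) P) {c : ℝ} (hc : 0 < c) :
    (∫⁻ ω, ENNReal.ofReal (f ω * ((f ω)⁻¹ / c)) ∂P) *
        ENNReal.ofReal (exp (-∫ ω, log ((f ω)⁻¹ / c) ∂P)) =
      ENNReal.ofReal (exp (∫ ω, log (f ω) ∂P)) := by
  have hconst : ∫⁻ ω, ENNReal.ofReal (f ω * ((f ω)⁻¹ / c)) ∂P = ENNReal.ofReal c⁻¹ := by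
    rw [lintegral_congr_ae (g := fun _ => ENNReal.ofReal c⁻¹), lintegral_const, measure_univ,
      mul_one]
    filter_upwards [hf] with ω hω
    rw [mul_div_assoc', mul_inv_cancel₀ hω.ne', one_div]
  have hlog : ∫ ω, log ((f ω)⁻¹ / c) ∂P = -((∫ ω, log (f ω) ∂P) + log c) := by
    rw [integral_congr_ae (hf.mono fun ω hω => log_inv_div_eq_neg_add hω.ne' hc.ne'),
      integral_neg, integral_add hlogf (integrable_const _), integral_const, probReal_univ,
      one_smul]
  rw [hconst, hlog, neg_neg, exp_add, exp_log hc, ← ENNReal.ofReal_mul (by positivity),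
    mul_left_comm, inv_mul_cancel₀ hc.ne', mul_one]

end

/-- robust representation of the logarithmic aggregator. For
every positive density ρ with ∫ ρ dP = 1 and log ρ ∈ L¹(P),
∫ f·ρ dP ≥ exp(∫ log f dP + ∫ log ρ dP) (in ℝ≥0∞, so the left side may be +∞);
equivalently exp(∫ log f dP) ≤ (∫ f·ρ dP)·exp(−∫ log ρ dP). Equality holds for
ρ* = f⁻¹/∫ f⁻¹ dP, so exp(∫ log f dP) is the least element (the infimum) of the
set of values (∫ f·ρ dP)·exp(−∫ log ρ dP). -/
theorem stmt14 {Ω : Type*} [MeasurableSpace Ω]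
    (P : Measure Ω) [IsProbabilityMeasure P]
    (f : Ω → ℝ) (hf : Measurable f) (hfpos : ∀ ω, 0 < f ω)
    (hlogf : Integrable (fun ω => Real.log (f ω)) P)
    (hfinv : Integrable (fun ω => (f ω)⁻¹) P) :
    (∀ ρ : Ω → ℝ, Measurable ρ → (∀ ω, 0 < ρ ω) →
        (∫⁻ ω, ENNReal.ofReal (ρ ω) ∂P) = 1 →
        Integrable (fun ω => Real.log (ρ ω)) P →
        ENNReal.ofReal
            (Real.exp ((∫ ω, Real.log (f ω) ∂P) + ∫ ω, Real.log (ρ ω) ∂P)) ≤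
          ∫⁻ ω, ENNReal.ofReal (f ω * ρ ω) ∂P) ∧
      IsLeast {v : ℝ≥0∞ | ∃ ρ : Ω → ℝ, Measurable ρ ∧ (∀ ω, 0 < ρ ω) ∧
            (∫⁻ ω, ENNReal.ofReal (ρ ω) ∂P) = 1 ∧
            Integrable (fun ω => Real.log (ρ ω)) P ∧
            v = (∫⁻ ω, ENNReal.ofReal (f ω * ρ ω) ∂P) *
                ENNReal.ofReal (Real.exp (-∫ ω, Real.log (ρ ω) ∂P))}
        (ENNReal.ofReal (Real.exp (∫ ω, Real.log (f ω) ∂P))) ∧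
      (ENNReal.ofReal (Real.exp (∫ ω, Real.log (f ω) ∂P)) =
        (∫⁻ ω, ENNReal.ofReal (f ω * ((f ω)⁻¹ / ∫ x, (f x)⁻¹ ∂P)) ∂P) *
          ENNReal.ofReal
            (Real.exp (-∫ ω, Real.log ((f ω)⁻¹ / ∫ x, (f x)⁻¹ ∂P) ∂P))) := by
  have hfpos' : ∀ᵐ ω ∂P, 0 < f ω := .of_forall hfpos
  have hc : 0 < ∫ x, (f x)⁻¹ ∂P := integral_pos_of_forall_pos_s14 (fun ω => inv_pos.2 (hfpos ω)) hfinv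
  have hopt := (lintegral_mul_exp_neg_of_inv_div_const hfpos' hlogf hc).symm
  refine ⟨fun ρ _ hρ _ hlogρ =>
      ofReal_exp_integral_log_add_le_lintegral_mul hfpos' (.of_forall hρ) hlogf hlogρ,
    ⟨⟨_, hf.inv.div_const _, fun ω => div_pos (inv_pos.2 (hfpos ω)) hc,
      lintegral_ofReal_div_integral_self_s14 hfinv (.of_forall fun ω => (inv_pos.2 (hfpos ω)).le)
        hc.ne',
      integrable_log_inv_div_const hfpos' hlogf hc, hopt⟩, ?_⟩, hopt⟩
  rintro _ ⟨ρ, -, hρ, -, hlogρ, rfl⟩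
  exact ofReal_exp_integral_log_le_lintegral_mul_exp_neg hfpos' (.of_forall hρ) hlogf hlogρ
end

section
/- For every ε > 0 there exists b ∈ ℝ such that U(x) ≤ εx + b for all x > 0; consequently the concave envelope U_c of U is real-valued (finite) at every x ∈ (0,∞), concave, nondecreasing, satisfies U_c ≥ U, and itself obeys the sublinear growth condition lim_{x→∞} U_c(x)/x = 0. -/
/-!
Being nondecreasing with `U x / x → 0`, `U` lies below a line `ε * x + b` for every `ε > 0`,
so it has affine majorants of arbitrarily small slope. The pointwise
infimum of all affine majorants is then finite, concave and `≥ U`; since a concave function lies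
below its supporting lines, it is the least concave majorant. Monotonicity of `U` forces every
affine majorant to have nonnegative slope, which makes the infimum nondecreasing, and the
majorants `ε * x + b` squeeze its growth down to `o(x)`.
-/

open Set Filter Topology

lemma ConvexOn.add_mul_rightDeriv_le {S : Set ℝ} {f : ℝ → ℝ} (hf : ConvexOn ℝ S f) {x y : ℝ}
    (hx : x ∈ interior S) (hy : y ∈ S) :
    f x + derivWithin f (Ioi x) x * (y - x) ≤ f y := by
  rcases lt_trichotomy y x with hyx | rfl | hxy
  · have hslope : slope f y x ≤ derivWithin f (Ioi x) x :=
      (hf.slope_le_leftDeriv_of_mem_interior hy hx hyx).trans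
        (hf.leftDeriv_le_rightDeriv_of_mem_interior hx)
    rw [slope_def_field, div_le_iff₀ (sub_pos.2 hyx)] at hslope
    linarith
  · simp
  · have hslope := hf.rightDeriv_le_slope_of_mem_interior hx hy hxy
    rw [slope_def_field, le_div_iff₀ (sub_pos.2 hxy)] at hslope
    linarith

lemma ConcaveOn.le_add_mul_rightDeriv {S : Set ℝ} {f : ℝ → ℝ} (hf : ConcaveOn ℝ S f) {x y : ℝ}
    (hx : x ∈ interior S) (hy : y ∈ S) :
    f y ≤ f x + derivWithin f (Ioi x) x * (y - x) := by
  have h := hf.neg.add_mul_rightDeriv_le hx hy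
  rw [derivWithin.neg] at h
  simp only [Pi.neg_apply] at h
  linarith

lemma exists_le_mul_add_of_tendsto_div_atTop {U : ℝ → ℝ} (hU : MonotoneOn U (Ioi 0))
    (hgrowth : Tendsto (fun x => U x / x) atTop (𝓝 0)) :
    ∀ ε > 0, ∃ b : ℝ, ∀ x > 0, U x ≤ ε * x + b := by
  intro ε hε
  obtain ⟨M, hM⟩ := eventually_atTop.1 (hgrowth.eventually (eventually_le_nhds hε))
  have hM1 : (0 : ℝ) < max M 1 := lt_max_of_lt_right one_pos
  refine ⟨max (U (max M 1)) 0, fun x hx => ?_⟩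
  have hεx : 0 ≤ ε * x := by positivity
  rcases le_or_gt x (max M 1) with hxM | hMx
  · have := hU hx hM1 hxM
    linarith [le_max_left (U (max M 1)) 0]
  · have := (div_le_iff₀ hx).1 (hM x ((le_max_left M 1).trans hMx.le))
    linarith [le_max_right (U (max M 1)) 0]

lemma tendsto_div_atTop_zero_of_le_of_le_mul_add {f g : ℝ → ℝ}
    (hg : Tendsto (fun x => g x / x) atTop (𝓝 0)) (hgf : ∀ x > 0, g x ≤ f x)
    (hf : ∀ ε > 0, ∃ b : ℝ, ∀ x > 0, f x ≤ ε * x + b) :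
    Tendsto (fun x => f x / x) atTop (𝓝 0) := by
  refine tendsto_order.2 ⟨fun c hc => ?_, fun c hc => ?_⟩
  · filter_upwards [hg.eventually (eventually_gt_nhds hc), eventually_gt_atTop 0] with x hcg hx
    exact hcg.trans_le (div_le_div_of_nonneg_right (hgf x hx) hx.le)
  · obtain ⟨b, hb⟩ := hf (c / 2) (half_pos hc)
    have hbx : Tendsto (fun x : ℝ => b / x) atTop (𝓝 0) :=
      tendsto_const_nhds.div_atTop tendsto_id
    filter_upwards [hbx.eventually (eventually_lt_nhds (half_pos hc)), eventually_gt_atTop 0]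
      with x hbx hx
    calc f x / x ≤ (c / 2 * x + b) / x := div_le_div_of_nonneg_right (hb x hx) hx.le
      _ = c / 2 + b / x := by field_simp
      _ < c := by linarith

def affineMajorants (s : Set ℝ) (U : ℝ → ℝ) : Set (ℝ × ℝ) :=
  {p | ∀ y ∈ s, U y ≤ p.1 * y + p.2}

/-- The concave envelope of `U` on an open convex `s`, as the infimum of its affine majorants
(junk value `0` when `U` has no affine majorant). -/
noncomputable def concaveEnvelope (s : Set ℝ) (U : ℝ → ℝ) (x : ℝ) : ℝ :=
  sInf ((fun p : ℝ × ℝ => p.1 * x + p.2) '' affineMajorants s U)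

section concaveEnvelope

variable {s : Set ℝ} {U : ℝ → ℝ} {x : ℝ}

lemma bddBelow_affineMajorants_image (hx : x ∈ s) :
    BddBelow ((fun p : ℝ × ℝ => p.1 * x + p.2) '' affineMajorants s U) :=
  ⟨U x, by rintro _ ⟨p, hp, rfl⟩; exact hp x hx⟩

lemma le_concaveEnvelope (hne : (affineMajorants s U).Nonempty) (hx : x ∈ s) :
    U x ≤ concaveEnvelope s U x :=
  le_csInf (hne.image _) (by rintro _ ⟨p, hp, rfl⟩; exact hp x hx)

lemma concaveEnvelope_le {p : ℝ × ℝ} (hp : p ∈ affineMajorants s U) (hx : x ∈ s) :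
    concaveEnvelope s U x ≤ p.1 * x + p.2 :=
  csInf_le (bddBelow_affineMajorants_image hx) ⟨p, hp, rfl⟩

lemma concaveOn_concaveEnvelope (hs : Convex ℝ s) (hne : (affineMajorants s U).Nonempty) :
    ConcaveOn ℝ s (concaveEnvelope s U) := by
  refine ⟨hs, fun x hx y hy a b ha hb hab => le_csInf (hne.image _) ?_⟩
  rintro _ ⟨p, hp, rfl⟩
  have hx' := mul_le_mul_of_nonneg_left (concaveEnvelope_le hp hx) ha
  have hy' := mul_le_mul_of_nonneg_left (concaveEnvelope_le hp hy) hb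
  simp only [smul_eq_mul]
  linear_combination hx' + hy' + p.2 * hab

lemma concaveEnvelope_le_of_concaveOn {V : ℝ → ℝ} (hV : ConcaveOn ℝ s V)
    (hUV : ∀ y ∈ s, U y ≤ V y) (hx : x ∈ interior s) :
    concaveEnvelope s U x ≤ V x := by
  set r := derivWithin V (Ioi x) x
  have hp : (r, V x - r * x) ∈ affineMajorants s U := fun y hy =>
    (hUV y hy).trans ((hV.le_add_mul_rightDeriv hx hy).trans_eq (by ring))
  simpa using concaveEnvelope_le hp (interior_subset hx)

lemma nonneg_of_mem_affineMajorants (hs : ¬BddAbove s) (hU : MonotoneOn U s) {p : ℝ × ℝ}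
    (hp : p ∈ affineMajorants s U) : 0 ≤ p.1 := by
  obtain ⟨x₀, hx₀⟩ := nonempty_of_not_bddAbove hs
  by_contra! ha
  refine hs ⟨max x₀ ((U x₀ - p.2) / p.1), fun y hy => ?_⟩
  rcases le_total y x₀ with hyx | hxy
  · exact hyx.trans (le_max_left _ _)
  · have := (hU hx₀ hy hxy).trans (hp y hy)
    exact (le_div_iff_of_neg ha).2 (by linarith) |>.trans (le_max_right _ _)

lemma monotoneOn_concaveEnvelope (hs : ¬BddAbove s) (hU : MonotoneOn U s)
    (hne : (affineMajorants s U).Nonempty) :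
    MonotoneOn (concaveEnvelope s U) s := by
  intro x hx y hy hxy
  refine le_csInf (hne.image _) ?_
  rintro _ ⟨p, hp, rfl⟩
  have := mul_le_mul_of_nonneg_left hxy (nonneg_of_mem_affineMajorants hs hU hp)
  linarith [concaveEnvelope_le hp hx]

end concaveEnvelope

/-- if U is nondecreasing on (0,∞) with lim_{x→∞} U(x)/x = 0,
then for every ε > 0 there is b with U(x) ≤ εx + b on (0,∞); consequently U
admits a (finite, real-valued) concave envelope U_c on (0,∞): a smallest
concave majorant, which is nondecreasing and itself satisfies
lim_{x→∞} U_c(x)/x = 0. -/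
theorem stmt17 (U : ℝ → ℝ) (hU : MonotoneOn U (Set.Ioi 0))
    (hgrowth : Tendsto (fun x => U x / x) atTop (nhds 0)) :
    (∀ ε > 0, ∃ b : ℝ, ∀ x > 0, U x ≤ ε * x + b) ∧
      ∃ Uc : ℝ → ℝ,
        ConcaveOn ℝ (Set.Ioi 0) Uc ∧
        (∀ x ∈ Set.Ioi (0 : ℝ), U x ≤ Uc x) ∧
        (∀ V : ℝ → ℝ, ConcaveOn ℝ (Set.Ioi 0) V →
          (∀ x ∈ Set.Ioi (0 : ℝ), U x ≤ V x) →
          ∀ x ∈ Set.Ioi (0 : ℝ), Uc x ≤ V x) ∧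
        MonotoneOn Uc (Set.Ioi 0) ∧
        Tendsto (fun x => Uc x / x) atTop (nhds 0) := by
  have hlin := exists_le_mul_add_of_tendsto_div_atTop hU hgrowth
  have hne : (affineMajorants (Ioi 0) U).Nonempty :=
    let ⟨b, hb⟩ := hlin 1 one_pos
    ⟨(1, b), hb⟩
  have hmaj : ∀ x ∈ Ioi (0 : ℝ), U x ≤ concaveEnvelope (Ioi 0) U x :=
    fun x hx => le_concaveEnvelope hne hx
  refine ⟨hlin, concaveEnvelope (Ioi 0) U, concaveOn_concaveEnvelope (convex_Ioi 0) hne, hmaj,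
    fun V hV hUV x hx => concaveEnvelope_le_of_concaveOn hV hUV (by rwa [interior_Ioi]),
    monotoneOn_concaveEnvelope (not_bddAbove_Ioi 0) hU hne,
    tendsto_div_atTop_zero_of_le_of_le_mul_add hgrowth hmaj fun ε hε => ?_⟩
  obtain ⟨b, hb⟩ := hlin ε hε
  exact ⟨b, fun x hx => concaveEnvelope_le (p := (ε, b)) hb hx⟩
end
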